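/- arXiv:2602.23001 — 2 statements merged into one kernel-verified Lean document; each statement's English description precedes it below -/
import Mathlib

section
/- Let q > 0. Then there exists a constant c ≡ c(q) ≥ 1 such that for all a, b ∈ ℝ and for both choices of sign: c^{−1} (|a| + |b|)^{q−1} (a−b)_±² ≤ 𝔤_±(a,b) ≤ c (|a| + |b|)^{q−1} (a−b)_±². -/
/-! Write `M = |a| + |b|` and `D = a - b > 0`, so that `D ≤ M`, `|t| ≤ M` on `[b, a]`, and
`𝔤₊(a,b) = q ∫_b^a |t|^{q-1} (t - b) dt`. For the lower bound, `[b, a]` contains an interval of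
length `D/8` on which `|t| ≥ M/4` and `t - b ≥ D/8` (next to `a` if `|b| ≤ |a|`, next to `b`
otherwise), so there the integrand is at least a multiple of `M^{q-1} D`. For the upper bound, if
`4D ≤ M` then `|t| ≥ M/4` on all of `[b, a]`, hence `|t|^{q-1}` is comparable to `M^{q-1}`;
otherwise `D` is comparable to `M`, and bounding `t - b ≤ D` and enlarging `[b, a]` to `[-M, M]`
gives `𝔤₊(a,b) ≤ 2 D M^q`. The reflection `t ↦ -t` turns `𝔤₋(a,b)` into `𝔤₊(-a,-b)`. -/

noncomputable section

/-- `𝔤₊(a,b) := q ∫_b^a |t|^{q-1} (t-b)₊ dt` (oriented integral). -/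
def gPlus (q a b : ℝ) : ℝ := q * ∫ t in b..a, |t| ^ (q - 1) * max (t - b) 0

/-- `𝔤₋(a,b) := -q ∫_b^a |t|^{q-1} (t-b)₋ dt` (oriented integral). -/
def gMinus (q a b : ℝ) : ℝ := -(q * ∫ t in b..a, |t| ^ (q - 1) * max (b - t) 0)

end

open MeasureTheory Set

lemma intervalIntegrable_abs_rpow {r : ℝ} (hr : -1 < r) (x y : ℝ) :
    IntervalIntegrable (fun t => |t| ^ r) volume x y := by
  have h_nonneg : ∀ z, 0 ≤ z → IntervalIntegrable (fun t => |t| ^ r) volume 0 z := by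
    intro z hz
    refine (intervalIntegral.intervalIntegrable_rpow' (a := 0) (b := z) hr).congr ?_
    intro t ht
    rw [uIoc_of_le hz] at ht
    simp only [abs_of_pos ht.1]
  have h_zero : ∀ z, IntervalIntegrable (fun t => |t| ^ r) volume 0 z := by
    intro z
    rcases le_total 0 z with hz | hz
    · exact h_nonneg z hz
    · rw [IntervalIntegrable.iff_comp_neg]
      simpa using h_nonneg (-z) (by linarith)
  exact (h_zero x).symm.trans (h_zero y)

lemma integral_abs_rpow_neg_self {r : ℝ} (hr : -1 < r) {x : ℝ} (hx : 0 ≤ x) :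
    ∫ t in -x..x, |t| ^ r = 2 * x ^ (r + 1) / (r + 1) := by
  have h_half : ∫ t in (0 : ℝ)..x, |t| ^ r = x ^ (r + 1) / (r + 1) := by
    rw [intervalIntegral.integral_congr (g := fun t => t ^ r) fun t ht => by
        rw [uIcc_of_le hx] at ht; simp only [abs_of_nonneg ht.1],
      integral_rpow (Or.inl hr), Real.zero_rpow (by linarith), sub_zero]
  have h_left : ∫ t in -x..0, |t| ^ r = ∫ t in (0 : ℝ)..x, |t| ^ r := by
    simpa using (intervalIntegral.integral_comp_neg (a := 0) (b := x) (fun t => |t| ^ r)).symm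
  rw [← intervalIntegral.integral_add_adjacent_intervals (b := 0)
      (intervalIntegrable_abs_rpow hr _ _) (intervalIntegrable_abs_rpow hr _ _), h_left, h_half]
  ring

lemma rpow_le_max_mul_rpow {k x y : ℝ} (r : ℝ) (hk : 0 < k) (hx : 0 < x) (hxy : x / k ≤ y)
    (hyx : y ≤ x) : y ^ r ≤ max (k ^ (-r)) 1 * x ^ r := by
  have hy : 0 < y := (div_pos hx hk).trans_le hxy
  rcases le_total 0 r with hr | hr
  · calc y ^ r ≤ x ^ r := Real.rpow_le_rpow hy.le hyx hr
      _ ≤ max (k ^ (-r)) 1 * x ^ r := le_mul_of_one_le_left (by positivity) (le_max_right _ _)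
  · calc y ^ r ≤ (x / k) ^ r := Real.rpow_le_rpow_of_nonpos (by positivity) hxy hr
      _ = k ^ (-r) * x ^ r := by rw [Real.div_rpow hx.le hk.le, Real.rpow_neg hk.le]; ring
      _ ≤ max (k ^ (-r)) 1 * x ^ r := by gcongr; exact le_max_left _ _

lemma min_mul_rpow_le_rpow {k x y : ℝ} (r : ℝ) (hk : 0 < k) (hx : 0 < x) (hxy : x / k ≤ y)
    (hyx : y ≤ x) : min (k ^ (-r)) 1 * x ^ r ≤ y ^ r := by
  have hy : 0 < y := (div_pos hx hk).trans_le hxy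
  rcases le_total 0 r with hr | hr
  · calc min (k ^ (-r)) 1 * x ^ r ≤ k ^ (-r) * x ^ r := by gcongr; exact min_le_left _ _
      _ = (x / k) ^ r := by rw [Real.div_rpow hx.le hk.le, Real.rpow_neg hk.le]; ring
      _ ≤ y ^ r := Real.rpow_le_rpow (by positivity) hxy hr
  · calc min (k ^ (-r)) 1 * x ^ r ≤ x ^ r :=
          mul_le_of_le_one_left (by positivity) (min_le_right _ _)
      _ ≤ y ^ r := Real.rpow_le_rpow_of_nonpos hy hyx hr

lemma exists_one_le_inv_le_and_le {k : ℝ} (hk : 0 < k) (K : ℝ) :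
    ∃ c : ℝ, 1 ≤ c ∧ c⁻¹ ≤ k ∧ K ≤ c := by
  refine ⟨max (max k⁻¹ K) 1, le_max_right _ _, ?_, le_max_of_le_left (le_max_right _ _)⟩
  exact inv_le_of_inv_le₀ hk (le_max_of_le_left (le_max_left _ _))

lemma abs_le_abs_add_abs_of_mem_Icc {a b t : ℝ} (ht : t ∈ Icc b a) : |t| ≤ |a| + |b| :=
  abs_le.2 ⟨by linarith [ht.1, neg_abs_le b, abs_nonneg a],
    by linarith [ht.2, le_abs_self a, abs_nonneg b]⟩

lemma half_abs_add_abs_sub_le_abs_of_mem_Icc {a b t : ℝ} (ht : t ∈ Icc b a) :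
    (|a| + |b|) / 2 - (a - b) ≤ |t| := by
  have ha : |a| - (a - t) ≤ |t| := by
    linarith [abs_sub_abs_le_abs_sub a t, abs_of_nonneg (sub_nonneg.2 ht.2)]
  have hb : |b| - (t - b) ≤ |t| := by
    linarith [abs_sub_abs_le_abs_sub b t, abs_sub_comm b t, abs_of_nonneg (sub_nonneg.2 ht.1)]
  rcases le_total |b| |a| with h | h <;> linarith [ht.1, ht.2]

lemma exists_Icc_subset_abs_ge {a b : ℝ} (hab : b < a) :
    ∃ c, b ≤ c ∧ c + (a - b) / 8 ≤ a ∧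
      ∀ t ∈ Icc c (c + (a - b) / 8), (|a| + |b|) / 4 ≤ |t| ∧ (a - b) / 8 ≤ t - b := by
  have hD : a - b ≤ |a| + |b| := by linarith [le_abs_self a, neg_abs_le b]
  rcases le_total |b| |a| with h | h
  · refine ⟨a - (a - b) / 8, by linarith, by linarith, fun t ht => ⟨?_, by linarith [ht.1]⟩⟩
    linarith [ht.1, ht.2, abs_sub_abs_le_abs_sub a t,
      abs_of_nonneg (by linarith [ht.2] : 0 ≤ a - t)]
  · refine ⟨b + (a - b) / 8, le_add_of_nonneg_right (by linarith), by linarith,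
      fun t ht => ⟨?_, by linarith [ht.1]⟩⟩
    linarith [ht.1, ht.2, abs_sub_abs_le_abs_sub b t, abs_sub_comm b t,
      abs_of_nonneg (by linarith [ht.1] : 0 ≤ t - b)]

section

variable {q a b : ℝ}

lemma intervalIntegrable_abs_rpow_mul_sub (hq : 0 < q) (b x y : ℝ) :
    IntervalIntegrable (fun t => |t| ^ (q - 1) * (t - b)) volume x y :=
  (intervalIntegrable_abs_rpow (by linarith) x y).mul_continuousOn (by fun_prop)

lemma integral_id_sub_left (a b : ℝ) : ∫ t in b..a, (t - b) = (a - b) ^ 2 / 2 := by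
  rw [intervalIntegral.integral_comp_sub_right (fun t => t), integral_id]
  ring

lemma gPlus_eq_zero_of_le (h : a ≤ b) : gPlus q a b = 0 := by
  rw [gPlus, intervalIntegral.integral_congr (g := fun _ => 0), intervalIntegral.integral_zero,
    mul_zero]
  intro t ht
  rw [uIcc_of_ge h] at ht
  simp [ht.2]

lemma gPlus_eq_integral (hab : b ≤ a) :
    gPlus q a b = q * ∫ t in b..a, |t| ^ (q - 1) * (t - b) := by
  rw [gPlus, intervalIntegral.integral_congr]
  intro t ht
  rw [uIcc_of_le hab] at ht
  simp [ht.1]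

lemma gMinus_eq_gPlus_neg (q a b : ℝ) : gMinus q a b = gPlus q (-a) (-b) := by
  rw [gMinus, gPlus, ← intervalIntegral.integral_comp_neg, intervalIntegral.integral_symm a b]
  simp only [abs_neg, sub_neg_eq_add, neg_add_eq_sub]
  ring

lemma mul_rpow_mul_sq_le_gPlus (hq : 0 < q) (hab : b < a) :
    q * min (4 ^ (-(q - 1))) 1 / 64 * (|a| + |b|) ^ (q - 1) * (a - b) ^ 2 ≤ gPlus q a b := by
  obtain ⟨c, hbc, hca, hc⟩ := exists_Icc_subset_abs_ge hab
  set M := |a| + |b|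
  set K := min ((4 : ℝ) ^ (-(q - 1))) 1
  have hM : 0 < M := by linarith [le_abs_self a, neg_abs_le b]
  have hpt : ∀ t ∈ Icc c (c + (a - b) / 8),
      K * M ^ (q - 1) * ((a - b) / 8) ≤ |t| ^ (q - 1) * (t - b) := fun t ht =>
    mul_le_mul (min_mul_rpow_le_rpow _ four_pos hM (hc t ht).1
        (abs_le_abs_add_abs_of_mem_Icc ⟨hbc.trans ht.1, ht.2.trans hca⟩))
      (hc t ht).2 (by linarith) (by positivity)
  calc q * K / 64 * M ^ (q - 1) * (a - b) ^ 2
      = q * ((c + (a - b) / 8 - c) * (K * M ^ (q - 1) * ((a - b) / 8))) := by ring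
    _ ≤ q * ∫ t in c..c + (a - b) / 8, |t| ^ (q - 1) * (t - b) := by
      gcongr
      have h := intervalIntegral.integral_mono_on (by linarith) intervalIntegrable_const
        (intervalIntegrable_abs_rpow_mul_sub hq b _ _) hpt
      rwa [intervalIntegral.integral_const, smul_eq_mul] at h
    _ ≤ q * ∫ t in b..a, |t| ^ (q - 1) * (t - b) := by
      gcongr
      refine intervalIntegral.integral_mono_interval hbc (by linarith) hca ?_
        (intervalIntegrable_abs_rpow_mul_sub hq b _ _)
      refine (ae_restrict_mem measurableSet_Ioc).mono fun t ht => ?_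
      exact mul_nonneg (by positivity) (by linarith [ht.1])
    _ = gPlus q a b := (gPlus_eq_integral hab.le).symm

lemma gPlus_le_two_mul_mul_rpow (hq : 0 < q) (hab : b ≤ a) :
    gPlus q a b ≤ 2 * (a - b) * (|a| + |b|) ^ q := by
  set M := |a| + |b|
  have hM : 0 ≤ M := by positivity
  have hr : -1 < q - 1 := by linarith
  calc gPlus q a b = q * ∫ t in b..a, |t| ^ (q - 1) * (t - b) := gPlus_eq_integral hab
    _ ≤ q * ∫ t in b..a, |t| ^ (q - 1) * (a - b) := by
      gcongr
      refine intervalIntegral.integral_mono_on hab (intervalIntegrable_abs_rpow_mul_sub hq b _ _)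
        ((intervalIntegrable_abs_rpow hr _ _).mul_const _) fun t ht => ?_
      gcongr
      exact ht.2
    _ = q * (a - b) * ∫ t in b..a, |t| ^ (q - 1) := by
      rw [intervalIntegral.integral_mul_const]; ring
    _ ≤ q * (a - b) * ∫ t in -M..M, |t| ^ (q - 1) := by
      have hMb : -M ≤ b := by linarith [neg_abs_le b, abs_nonneg a]
      have haM : a ≤ M := by linarith [le_abs_self a, abs_nonneg b]
      gcongr
      exact intervalIntegral.integral_mono_interval hMb hab haM
        (Filter.Eventually.of_forall fun t => by positivity) (intervalIntegrable_abs_rpow hr _ _)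
    _ = 2 * (a - b) * M ^ q := by
      rw [integral_abs_rpow_neg_self hr hM, sub_add_cancel]
      field_simp

lemma gPlus_le_of_four_mul_le (hq : 0 < q) (hab : b < a) (h : 4 * (a - b) ≤ |a| + |b|) :
    gPlus q a b ≤ q / 2 * max (4 ^ (-(q - 1))) 1 * (|a| + |b|) ^ (q - 1) * (a - b) ^ 2 := by
  set M := |a| + |b|
  set K := max ((4 : ℝ) ^ (-(q - 1))) 1
  have hM : 0 < M := by linarith
  have hpt : ∀ t ∈ Icc b a, |t| ^ (q - 1) * (t - b) ≤ K * M ^ (q - 1) * (t - b) := by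
    intro t ht
    have := half_abs_add_abs_sub_le_abs_of_mem_Icc ht
    gcongr
    · linarith [ht.1]
    · exact rpow_le_max_mul_rpow _ four_pos hM (by linarith) (abs_le_abs_add_abs_of_mem_Icc ht)
  calc gPlus q a b = q * ∫ t in b..a, |t| ^ (q - 1) * (t - b) := gPlus_eq_integral hab.le
    _ ≤ q * ∫ t in b..a, K * M ^ (q - 1) * (t - b) := by
      gcongr
      exact intervalIntegral.integral_mono_on hab.le
        (intervalIntegrable_abs_rpow_mul_sub hq b _ _)
        ((continuous_const.mul (continuous_sub_right b)).intervalIntegrable _ _) hpt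
    _ = q / 2 * K * M ^ (q - 1) * (a - b) ^ 2 := by
      rw [intervalIntegral.integral_const_mul, integral_id_sub_left]; ring

lemma gPlus_le_mul_rpow_mul_sq (hq : 0 < q) (hab : b < a) :
    gPlus q a b ≤ (q / 2 * max (4 ^ (-(q - 1))) 1 + 8) * (|a| + |b|) ^ (q - 1) * (a - b) ^ 2 := by
  set M := |a| + |b|
  have hM : 0 < M := by linarith [le_abs_self a, neg_abs_le b]
  have hMq : 0 ≤ M ^ (q - 1) := by positivity
  rcases le_or_gt (4 * (a - b)) M with h | h
  · calc gPlus q a b ≤ q / 2 * max (4 ^ (-(q - 1))) 1 * M ^ (q - 1) * (a - b) ^ 2 :=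
          gPlus_le_of_four_mul_le hq hab h
      _ ≤ _ := by gcongr; linarith
  · calc gPlus q a b ≤ 2 * (a - b) * M ^ q := gPlus_le_two_mul_mul_rpow hq hab.le
      _ = 2 * (a - b) * M * M ^ (q - 1) := by
        rw [mul_assoc _ M, ← Real.rpow_one_add' hM.le (by linarith), add_sub_cancel]
      _ ≤ 8 * M ^ (q - 1) * (a - b) ^ 2 := by
        have := mul_le_mul_of_nonneg_left h.le (by positivity : 0 ≤ 2 * (a - b) * M ^ (q - 1))
        linarith
      _ ≤ _ := by gcongr; exact le_add_of_nonneg_left (by positivity)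

lemma exists_gPlus_bounds (hq : 0 < q) :
    ∃ c : ℝ, 1 ≤ c ∧ ∀ a b : ℝ,
      c⁻¹ * (|a| + |b|) ^ (q - 1) * max (a - b) 0 ^ 2 ≤ gPlus q a b ∧
        gPlus q a b ≤ c * (|a| + |b|) ^ (q - 1) * max (a - b) 0 ^ 2 := by
  obtain ⟨c, hc1, hc_lower, hc_upper⟩ := exists_one_le_inv_le_and_le
    (k := q * min (4 ^ (-(q - 1))) 1 / 64) (by positivity) (q / 2 * max (4 ^ (-(q - 1))) 1 + 8)
  refine ⟨c, hc1, fun a b => ?_⟩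
  rcases le_or_gt a b with hab | hab
  · simp [gPlus_eq_zero_of_le hab, sub_nonpos.2 hab]
  rw [max_eq_left (sub_nonneg.2 hab.le)]
  constructor
  · exact le_trans (by gcongr) (mul_rpow_mul_sq_le_gPlus hq hab)
  · exact (gPlus_le_mul_rpow_mul_sq hq hab).trans (by gcongr)

end

/-- for `q > 0` there is `c = c(q) ≥ 1` such that for all `a, b ∈ ℝ` and
both signs, `c⁻¹ (|a|+|b|)^{q-1} (a-b)_±² ≤ 𝔤_±(a,b) ≤ c (|a|+|b|)^{q-1} (a-b)_±²`. -/
theorem gPlus_gMinus_bounds (q : ℝ) (hq : 0 < q) :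
    ∃ c : ℝ, 1 ≤ c ∧ ∀ a b : ℝ,
      (c⁻¹ * (|a| + |b|) ^ (q - 1) * max (a - b) 0 ^ 2 ≤ gPlus q a b ∧
        gPlus q a b ≤ c * (|a| + |b|) ^ (q - 1) * max (a - b) 0 ^ 2) ∧
      (c⁻¹ * (|a| + |b|) ^ (q - 1) * max (b - a) 0 ^ 2 ≤ gMinus q a b ∧
        gMinus q a b ≤ c * (|a| + |b|) ^ (q - 1) * max (b - a) 0 ^ 2) := by
  obtain ⟨c, hc1, hc⟩ := exists_gPlus_bounds hq
  refine ⟨c, hc1, fun a b => ⟨hc a b, ?_⟩⟩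
  simpa only [gMinus_eq_gPlus_neg, abs_neg, neg_sub_neg] using hc (-a) (-b)
end

section
/- Let (a_n)_{n∈ℕ₀} be a bounded sequence of nonnegative real numbers, let b > 1, δ ∈ (0,1) with δ b < 1, and B ≥ 0, and suppose a_n ≤ δ a_{n+1} + B b^n for all n ∈ ℕ₀. Then a₀ ≤ B/(1 − δ b). -/
/-!
Unrolling the recursion `n` times gives `a₀ ≤ δⁿ aₙ + B ∑_{k<n} (δb)ᵏ ≤ δⁿ M + B/(1 - δb)`,
where `M` bounds the sequence; letting `n → ∞` kills the term `δⁿ M`.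
-/

open Finset Filter Topology

theorem le_pow_mul_add_sum_of_le_mul_succ_add {R : Type*} [Semiring R] [PartialOrder R]
    [IsOrderedRing R] {a c : ℕ → R} {δ : R} (hδ : 0 ≤ δ)
    (h : ∀ n, a n ≤ δ * a (n + 1) + c n) (n : ℕ) :
    a 0 ≤ δ ^ n * a n + ∑ k ∈ range n, δ ^ k * c k := by
  induction n with
  | zero => simp
  | succ n ih =>
    calc a 0 ≤ δ ^ n * a n + ∑ k ∈ range n, δ ^ k * c k := ih
      _ ≤ δ ^ n * (δ * a (n + 1) + c n) + ∑ k ∈ range n, δ ^ k * c k := by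
        gcongr
        exact h n
      _ = δ ^ (n + 1) * a (n + 1) + ∑ k ∈ range (n + 1), δ ^ k * c k := by
        rw [sum_range_succ, mul_add, ← mul_assoc, ← pow_succ, add_assoc, add_comm (δ ^ n * c n)]

theorem le_of_forall_le_pow_mul_add {x δ M L : ℝ} (hδ₀ : 0 ≤ δ) (hδ₁ : δ < 1)
    (h : ∀ n : ℕ, x ≤ δ ^ n * M + L) : x ≤ L := by
  have hlim : Tendsto (fun n : ℕ => δ ^ n * M + L) atTop (𝓝 (0 * M + L)) :=
    ((tendsto_pow_atTop_nhds_zero_of_lt_one hδ₀ hδ₁).mul_const M).add tendsto_const_nhds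
  rw [zero_mul, zero_add] at hlim
  exact ge_of_tendsto' hlim h

theorem sum_range_pow_mul_mul_pow_le {δ b B : ℝ} (hδb₀ : 0 ≤ δ * b) (hδb₁ : δ * b < 1)
    (hB : 0 ≤ B) (n : ℕ) : ∑ k ∈ range n, δ ^ k * (B * b ^ k) ≤ B / (1 - δ * b) := by
  calc ∑ k ∈ range n, δ ^ k * (B * b ^ k) = B * ∑ k ∈ Ico 0 n, (δ * b) ^ k := by
        rw [← range_eq_Ico, mul_sum]
        exact sum_congr rfl fun k _ => by ring
    _ ≤ B * ((δ * b) ^ 0 / (1 - δ * b)) := by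
        gcongr
        exact geom_sum_Ico_le_of_lt_one hδb₀ hδb₁
    _ = B / (1 - δ * b) := by rw [pow_zero, mul_one_div]

theorem iterated_absorption_general (a : ℕ → ℝ)
    (hbd : ∃ M : ℝ, ∀ n, a n ≤ M)
    (b δ B : ℝ) (hb : 1 < b) (hδ : δ ∈ Set.Ioo (0 : ℝ) 1) (hδb : δ * b < 1)
    (hB : 0 ≤ B)
    (hrec : ∀ n : ℕ, a n ≤ δ * a (n + 1) + B * b ^ n) :
    a 0 ≤ B / (1 - δ * b) := by
  obtain ⟨M, hM⟩ := hbd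
  obtain ⟨hδ₀, hδ₁⟩ := hδ
  have hδb₀ : 0 ≤ δ * b := mul_nonneg hδ₀.le (zero_le_one.trans hb.le)
  refine le_of_forall_le_pow_mul_add hδ₀.le hδ₁ (M := M) fun n => ?_
  calc a 0 ≤ δ ^ n * a n + ∑ k ∈ range n, δ ^ k * (B * b ^ k) :=
        le_pow_mul_add_sum_of_le_mul_succ_add hδ₀.le hrec n
    _ ≤ δ ^ n * M + B / (1 - δ * b) :=
        add_le_add (mul_le_mul_of_nonneg_left (hM n) (pow_nonneg hδ₀.le n))
          (sum_range_pow_mul_mul_pow_le hδb₀ hδb hB n)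

/-- if a bounded sequence of nonnegative reals satisfies
`a_n ≤ δ a_{n+1} + B bⁿ` with `b > 1`, `δ ∈ (0,1)`, `δ b < 1`, `B ≥ 0`,
then `a₀ ≤ B/(1 - δ b)`. -/
theorem iterated_absorption (a : ℕ → ℝ) (hnn : ∀ n, 0 ≤ a n)
    (hbd : ∃ M : ℝ, ∀ n, a n ≤ M)
    (b δ B : ℝ) (hb : 1 < b) (hδ : δ ∈ Set.Ioo (0 : ℝ) 1) (hδb : δ * b < 1)
    (hB : 0 ≤ B)
    (hrec : ∀ n : ℕ, a n ≤ δ * a (n + 1) + B * b ^ n) :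
    a 0 ≤ B / (1 - δ * b) :=
  iterated_absorption_general a hbd b δ B hb hδ hδb hB hrec
end
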